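/- For a fixed integer K with 1 ≤ K < C, the adaptive gain satisfies the lower bound Δ_K ≥ d_{K,1} = ∬ (η̃_{K+1}(x) − η̃_K(x'))⁺ dμ(x) dμ(x'), where a⁺ = max(a, 0) and the double integral is over two independent copies of the input distribution. -/
import Mathlib


open MeasureTheory Finset

/-- Error rate of a set-valued classifier: `ℰ(S) = ∫ (1 − ∑_{k∈S(x)} η_k(x)) dμ(x)`. -/
noncomputable def errRate {𝒳 : Type*} [MeasurableSpace 𝒳] (μ : Measure 𝒳) {C : ℕ}
    (η : 𝒳 → Fin C → ℝ) (S : 𝒳 → Finset (Fin C)) : ℝ :=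
  ∫ x, (1 - ∑ k ∈ S x, η x k) ∂μ

/-- Average set size of a set-valued classifier: `ℐ(S) = ∫ |S(x)| dμ(x)`. -/
noncomputable def avgSize {𝒳 : Type*} [MeasurableSpace 𝒳] (μ : Measure 𝒳) {C : ℕ}
    (S : 𝒳 → Finset (Fin C)) : ℝ :=
  ∫ x, ((S x).card : ℝ) ∂μ

/-- `G_η(λ) = ∑_{k=1}^C μ{x : η_k(x) > λ}`. -/
noncomputable def Gfun {𝒳 : Type*} [MeasurableSpace 𝒳] (μ : Measure 𝒳) {C : ℕ}
    (η : 𝒳 → Fin C → ℝ) (lam : ℝ) : ℝ :=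
  ∑ k : Fin C, (μ {x | lam < η x k}).toReal

/-- `λ_𝒦 = min {λ ∈ [0,1] : G_η(λ) ≤ 𝒦}` (as an infimum). -/
noncomputable def lamThresh {𝒳 : Type*} [MeasurableSpace 𝒳] (μ : Measure 𝒳) {C : ℕ}
    (η : 𝒳 → Fin C → ℝ) (K : ℝ) : ℝ :=
  sInf {lam : ℝ | lam ∈ Set.Icc (0 : ℝ) 1 ∧ Gfun μ η lam ≤ K}

/-- `𝒮_𝒦^+(x) = {k : η_k(x) > λ_𝒦}`. -/
noncomputable def Splus {𝒳 : Type*} [MeasurableSpace 𝒳] (μ : Measure 𝒳) {C : ℕ}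
    (η : 𝒳 → Fin C → ℝ) (K : ℝ) : 𝒳 → Finset (Fin C) :=
  fun x => Finset.univ.filter (fun k => lamThresh μ η K < η x k)

lemma aux_integrable {𝒳 : Type*} [MeasurableSpace 𝒳] {μ : Measure 𝒳} [IsFiniteMeasure μ]
    {f : 𝒳 → ℝ} (hf : Measurable f) (M : ℝ) (h : ∀ x, |f x| ≤ M) : Integrable f μ :=
  ⟨hf.aestronglyMeasurable, HasFiniteIntegral.of_bounded (C := M) (ae_of_all _ h)⟩

lemma aux_meas_sorted {𝒳 : Type*} [MeasurableSpace 𝒳] {C : ℕ} {η ηs : 𝒳 → Fin C → ℝ}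
    (hη : ∀ k, Measurable fun x => η x k)
    (hηs : ∀ x, ∃ σ : Equiv.Perm (Fin C), (∀ k, ηs x k = η x (σ k)) ∧
      ∀ i j : Fin C, i ≤ j → ηs x j ≤ ηs x i) (k : Fin C) :
    Measurable fun x => ηs x k := by
  classical
  apply measurable_of_Ioi
  intro t
  have key : ∀ x, t < ηs x k ↔ (k:ℕ)+1 ≤ (univ.filter fun i => t < η x i).card := by
    intro x
    obtain ⟨σ, hσ, hmono⟩ := hηs x
    have himg : (univ.filter fun i => t < η x i)
        = (univ.filter fun i => t < ηs x i).image σ := by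
      ext j
      simp only [mem_image, mem_filter, mem_univ, true_and]
      constructor
      · intro hj
        exact ⟨σ.symm j, by rw [hσ, σ.apply_symm_apply]; exact hj, σ.apply_symm_apply j⟩
      · rintro ⟨i, hi, rfl⟩
        rw [← hσ]; exact hi
    rw [himg, Finset.card_image_of_injective _ σ.injective]
    constructor
    · intro ht
      have hsub : Finset.Iic k ⊆ univ.filter fun i => t < ηs x i := by
        intro i hi
        simp only [mem_filter, mem_univ, true_and]
        exact lt_of_lt_of_le ht (hmono i k (Finset.mem_Iic.1 hi))
      calc (k:ℕ)+1 = (Finset.Iic k).card := (Fin.card_Iic k).symm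
        _ ≤ _ := Finset.card_le_card hsub
    · intro hc
      by_contra ht
      push_neg at ht
      have hsub : (univ.filter fun i => t < ηs x i) ⊆ Finset.Iio k := by
        intro i hi
        simp only [mem_filter, mem_univ, true_and] at hi
        rw [Finset.mem_Iio]
        by_contra hik
        push_neg at hik
        exact absurd (lt_of_lt_of_le hi (hmono k i hik)) (not_lt.2 ht)
      have := Finset.card_le_card hsub
      rw [Fin.card_Iio] at this
      omega
  have : (fun x => ηs x k) ⁻¹' Set.Ioi t
      = (fun x => (univ.filter fun i => t < η x i).card) ⁻¹' Set.Ici ((k:ℕ)+1) := by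
    ext x
    simp only [Set.mem_preimage, Set.mem_Ioi, Set.mem_Ici, key x]
  rw [this]
  have hN : Measurable fun x => (univ.filter fun i => t < η x i).card := by
    have : ∀ x, (univ.filter fun i => t < η x i).card
        = ∑ i : Fin C, if t < η x i then 1 else 0 := by
      intro x; rw [Finset.card_filter]
    simp only [this]
    exact Finset.measurable_sum _ fun i _ =>
      Measurable.ite (measurableSet_lt measurable_const (hη i)) measurable_const measurable_const
  exact hN measurableSet_Ici


/-- for `1 ≤ K < C`, the adaptive gain satisfies
`Δ_K ≥ d_{K,1} = ∬ (η̃_{K+1}(x) − η̃_K(x'))⁺ dμ(x) dμ(x')`. -/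
theorem stmt_8 {𝒳 : Type*} [MeasurableSpace 𝒳] (μ : Measure 𝒳) [IsProbabilityMeasure μ]
    {C : ℕ} (η : 𝒳 → Fin C → ℝ)
    (hη : ∀ k, Measurable fun x => η x k)
    (hη0 : ∀ x k, 0 ≤ η x k) (hη1 : ∀ x, ∑ k, η x k = 1)
    (K : ℕ) (hK1 : 1 ≤ K) (hKC : K < C)
    -- the decreasing rearrangement of the conditional probabilities
    (ηs : 𝒳 → Fin C → ℝ)
    (hηs : ∀ x, ∃ σ : Equiv.Perm (Fin C), (∀ k, ηs x k = η x (σ k)) ∧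
      ∀ i j : Fin C, i ≤ j → ηs x j ≤ ηs x i)
    -- the optimal top-K classifier
    (StopK : 𝒳 → Finset (Fin C))
    (hS_meas : ∀ k, MeasurableSet {x | k ∈ StopK x})
    (hS_card : ∀ x, (StopK x).card = K)
    (hS_top : ∀ x, ∀ k ∈ StopK x, ∀ j, j ∉ StopK x → η x j ≤ η x k)
    -- the tie-breaking part of the optimal average-K classifier, assumed to exist
    (T : 𝒳 → Finset (Fin C))
    (hT_meas : ∀ k, MeasurableSet {x | k ∈ T x})
    (hT_tie : ∀ x, ∀ k ∈ T x, η x k = lamThresh μ η (K : ℝ))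
    (hT_size : avgSize μ T = (K : ℝ) - avgSize μ (Splus μ η (K : ℝ))) :
    errRate μ η StopK - errRate μ η (fun x => Splus μ η (K : ℝ) x ∪ T x)
      ≥ ∫ x, ∫ x', max (ηs x ⟨K, hKC⟩ - ηs x' ⟨K - 1, by omega⟩) 0 ∂μ ∂μ := by
  classical
  have hK1C : K - 1 < C := by omega
  show errRate μ η StopK - errRate μ η (fun x => Splus μ η (K : ℝ) x ∪ T x)
      ≥ ∫ x, ∫ x', max (ηs x ⟨K, hKC⟩ - ηs x' ⟨K - 1, hK1C⟩) 0 ∂μ ∂μ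
  set kK : Fin C := ⟨K, hKC⟩ with hkK
  set kK1 : Fin C := ⟨K - 1, hK1C⟩ with hkK1
  set lam := lamThresh μ η (K : ℝ) with hlamdef
  -- basic bounds on η
  have hub : ∀ x k, η x k ≤ 1 := by
    intro x k
    calc η x k ≤ ∑ j, η x j := Finset.single_le_sum (fun j _ => hη0 x j) (mem_univ k)
      _ = 1 := hη1 x
  -- λ ∈ [0,1]
  have hmem1 : (1:ℝ) ∈ {l : ℝ | l ∈ Set.Icc (0 : ℝ) 1 ∧ Gfun μ η l ≤ (K:ℝ)} := by
    refine ⟨⟨zero_le_one, le_refl 1⟩, ?_⟩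
    have he : ∀ k : Fin C, {x | (1:ℝ) < η x k} = ∅ := by
      intro k; ext x
      simp only [Set.mem_setOf_eq, Set.mem_empty_iff_false, iff_false, not_lt]
      exact hub x k
    simp only [Gfun, he, measure_empty, ENNReal.toReal_zero, Finset.sum_const_zero]
    exact_mod_cast Nat.zero_le K
  have hlam0 : 0 ≤ lam :=
    le_csInf ⟨1, hmem1⟩ (fun l hl => hl.1.1)
  have hlam1 : lam ≤ 1 := csInf_le ⟨0, fun l hl => hl.1.1⟩ hmem1
  -- bounds on ηs
  have hs0 : ∀ x k, 0 ≤ ηs x k := by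
    intro x k; obtain ⟨σ, hσ, _⟩ := hηs x; rw [hσ]; exact hη0 x _
  have hs1 : ∀ x k, ηs x k ≤ 1 := by
    intro x k; obtain ⟨σ, hσ, _⟩ := hηs x; rw [hσ]; exact hub x _
  -- measurability of order statistics
  have ha : Measurable fun x => ηs x kK := aux_meas_sorted hη hηs kK
  have hb : Measurable fun x => ηs x kK1 := aux_meas_sorted hη hηs kK1
  -- membership and disjointness facts
  have hSp : ∀ x k, k ∈ Splus μ η (K:ℝ) x ↔ lam < η x k := by
    intro x k; simp [Splus, hlamdef]
  have hdisj : ∀ x, Disjoint (Splus μ η (K:ℝ) x) (T x) := by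
    intro x
    rw [Finset.disjoint_left]
    intro k hk hkT
    have h1 := hT_tie x k hkT
    have h2 := (hSp x k).1 hk
    linarith
  have hcardU : ∀ x, ((Splus μ η (K:ℝ) x ∪ T x).card : ℝ)
      = ((Splus μ η (K:ℝ) x).card : ℝ) + ((T x).card : ℝ) := by
    intro x
    rw [Finset.card_union_of_disjoint (hdisj x)]
    push_cast; ring
  ------------------------------------------------------------------
  -- pointwise key inequality
  ------------------------------------------------------------------
  have key : ∀ x, (∑ k ∈ (Splus μ η (K:ℝ) x ∪ T x), η x k) - (∑ k ∈ StopK x, η x k)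
      ≥ max (ηs x kK - lam) 0 + max (lam - ηs x kK1) 0
        + lam * (((Splus μ η (K:ℝ) x ∪ T x).card : ℝ) - K) := by
    intro x
    obtain ⟨σ, hσ, hmono⟩ := hηs x
    -- (iii) ∑_{union}(η−λ) = ∑_univ (η−λ)⁺
    have hsum_union : ∑ k ∈ (Splus μ η (K:ℝ) x ∪ T x), (η x k - lam)
        = ∑ k : Fin C, max (η x k - lam) 0 := by
      rw [Finset.sum_union (hdisj x)]
      have h1 : ∑ k ∈ T x, (η x k - lam) = 0 :=
        Finset.sum_eq_zero (fun k hk => by rw [hT_tie x k hk]; exact sub_self lam)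
      have h2 : ∑ k ∈ Splus μ η (K:ℝ) x, (η x k - lam)
          = ∑ k ∈ Splus μ η (K:ℝ) x, max (η x k - lam) 0 :=
        Finset.sum_congr rfl (fun k hk =>
          (max_eq_left (le_of_lt (sub_pos.2 ((hSp x k).1 hk)))).symm)
      rw [h1, h2, add_zero]
      refine Finset.sum_subset (Finset.subset_univ _) (fun k _ hk => ?_)
      have hle : η x k ≤ lam := not_lt.1 (fun h => hk ((hSp x k).2 h))
      exact max_eq_right (sub_nonpos.2 hle)
    -- (iv) a witness outside StopK with value ≥ ηs x kK
    have hj : ∃ j, j ∉ StopK x ∧ ηs x kK ≤ η x j := by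
      have hI : ((Finset.Iic kK).image σ).card = K + 1 := by
        rw [Finset.card_image_of_injective _ σ.injective, Fin.card_Iic]
      have hns : ¬ ((Finset.Iic kK).image σ ⊆ StopK x) := by
        intro h
        have h1 := Finset.card_le_card h
        rw [hI, hS_card x] at h1
        omega
      obtain ⟨j, hjI, hjS⟩ := Finset.not_subset.1 hns
      obtain ⟨i, hi, rfl⟩ := Finset.mem_image.1 hjI
      exact ⟨σ i, hjS, by rw [← hσ i]; exact hmono i kK (Finset.mem_Iic.1 hi)⟩
    -- (vi) a witness inside StopK with value ≤ ηs x kK1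
    have hm : ∃ m ∈ StopK x, η x m ≤ ηs x kK1 := by
      by_cases hc : StopK x ⊆ (Finset.Iic kK1).image σ
      · have hcard : ((Finset.Iic kK1).image σ).card = K := by
          rw [Finset.card_image_of_injective _ σ.injective, Fin.card_Iic]
          simp only [hkK1]
          omega
        have heq : StopK x = (Finset.Iic kK1).image σ :=
          Finset.eq_of_subset_of_card_le hc (by rw [hcard, hS_card x])
        refine ⟨σ kK1, ?_, ?_⟩
        · rw [heq]; exact Finset.mem_image_of_mem σ (Finset.mem_Iic.2 le_rfl)
        · rw [← hσ kK1]
      · obtain ⟨m, hmS, hmI⟩ := Finset.not_subset.1 hc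
        refine ⟨m, hmS, ?_⟩
        have hni : ¬ (σ.symm m ≤ kK1) := fun h =>
          hmI (Finset.mem_image.2 ⟨σ.symm m, Finset.mem_Iic.2 h, σ.apply_symm_apply m⟩)
        have hle := hmono kK1 (σ.symm m) (le_of_not_ge hni)
        rw [hσ (σ.symm m), σ.apply_symm_apply] at hle
        exact hle
    obtain ⟨j, hjS, hja⟩ := hj
    obtain ⟨m, hmS, hmb⟩ := hm
    -- (v)
    have h5 : max (η x j - lam) 0 + ∑ k ∈ StopK x, max (η x k - lam) 0
        ≤ ∑ k : Fin C, max (η x k - lam) 0 := by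
      have h5' := Finset.sum_le_sum_of_subset_of_nonneg
        (f := fun k => max (η x k - lam) 0) (Finset.subset_univ (insert j (StopK x)))
        (fun k _ _ => le_max_right _ 0)
      rwa [Finset.sum_insert hjS] at h5'
    -- (vii)
    have h7 : ∑ k ∈ StopK x, (η x k - lam)
        ≤ ∑ k ∈ StopK x, max (η x k - lam) 0 - max (lam - η x m) 0 := by
      have e : ∀ k, η x k - lam = max (η x k - lam) 0 - max (lam - η x k) 0 := by
        intro k
        rcases le_total (η x k) lam with h | h
        · rw [max_eq_right (by linarith), max_eq_left (by linarith)]; ring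
        · rw [max_eq_left (by linarith), max_eq_right (by linarith)]; ring
      rw [Finset.sum_congr rfl (fun k _ => e k), Finset.sum_sub_distrib]
      have hs : max (lam - η x m) 0 ≤ ∑ k ∈ StopK x, max (lam - η x k) 0 :=
        Finset.single_le_sum (f := fun k => max (lam - η x k) 0)
          (fun k _ => le_max_right _ _) hmS
      linarith
    -- monotone comparisons
    have hja' : max (ηs x kK - lam) 0 ≤ max (η x j - lam) 0 :=
      max_le_max (by linarith) le_rfl
    have hmb' : max (lam - ηs x kK1) 0 ≤ max (lam - η x m) 0 :=
      max_le_max (by linarith) le_rfl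
    -- expand the two sums with λ·card
    have E1 : ∑ k ∈ (Splus μ η (K:ℝ) x ∪ T x), (η x k - lam)
        = (∑ k ∈ (Splus μ η (K:ℝ) x ∪ T x), η x k)
          - (((Splus μ η (K:ℝ) x ∪ T x).card : ℝ)) * lam := by
      rw [Finset.sum_sub_distrib, Finset.sum_const, nsmul_eq_mul]
    have E2 : ∑ k ∈ StopK x, (η x k - lam)
        = (∑ k ∈ StopK x, η x k) - (K : ℝ) * lam := by
      rw [Finset.sum_sub_distrib, Finset.sum_const, nsmul_eq_mul, hS_card x]
    have hring : lam * (((Splus μ η (K:ℝ) x ∪ T x).card : ℝ) - (K:ℝ))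
        = ((Splus μ η (K:ℝ) x ∪ T x).card : ℝ) * lam - (K:ℝ) * lam := by ring
    linarith [hsum_union, h5, h7, hja', hmb', E1, E2, hring]
  ------------------------------------------------------------------
  -- integrability
  ------------------------------------------------------------------
  have hmemU : ∀ k, MeasurableSet {x | k ∈ Splus μ η (K:ℝ) x ∪ T x} := by
    intro k
    have : {x | k ∈ Splus μ η (K:ℝ) x ∪ T x}
        = {x | lam < η x k} ∪ {x | k ∈ T x} := by
      ext x
      simp [Finset.mem_union, hSp x k, Set.mem_setOf_eq]
    rw [this]
    exact (measurableSet_lt measurable_const (hη k)).union (hT_meas k)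
  have hmemSp : ∀ k, MeasurableSet {x | k ∈ Splus μ η (K:ℝ) x} := by
    intro k
    have : {x | k ∈ Splus μ η (K:ℝ) x} = {x | lam < η x k} := by
      ext x; simp [hSp x k]
    rw [this]
    exact measurableSet_lt measurable_const (hη k)
  -- generic: sum of η over a measurable family
  have hsum_meas : ∀ (S : 𝒳 → Finset (Fin C)), (∀ k, MeasurableSet {x | k ∈ S x}) →
      Measurable fun x => ∑ k ∈ S x, η x k := by
    intro S hS
    have he : ∀ x, ∑ k ∈ S x, η x k = ∑ k : Fin C, if k ∈ S x then η x k else 0 := by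
      intro x
      rw [Finset.sum_ite_mem, Finset.univ_inter]
    simp only [he]
    exact Finset.measurable_sum _ fun k _ =>
      Measurable.ite (hS k) (hη k) measurable_const
  have hcard_meas : ∀ (S : 𝒳 → Finset (Fin C)), (∀ k, MeasurableSet {x | k ∈ S x}) →
      Measurable fun x => ((S x).card : ℝ) := by
    intro S hS
    have he : ∀ x, ((S x).card : ℝ) = ∑ k : Fin C, if k ∈ S x then (1:ℝ) else 0 := by
      intro x
      rw [Finset.sum_ite_mem, Finset.univ_inter, Finset.sum_const, nsmul_eq_mul, mul_one]
    simp only [he]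
    exact Finset.measurable_sum _ fun k _ =>
      Measurable.ite (hS k) measurable_const measurable_const
  have hsum_bd : ∀ (S : 𝒳 → Finset (Fin C)) (x : 𝒳), |∑ k ∈ S x, η x k| ≤ 1 := by
    intro S x
    rw [abs_le]
    constructor
    · have : (0:ℝ) ≤ ∑ k ∈ S x, η x k := Finset.sum_nonneg fun k _ => hη0 x k
      linarith
    · calc ∑ k ∈ S x, η x k ≤ ∑ k : Fin C, η x k :=
          Finset.sum_le_sum_of_subset_of_nonneg (Finset.subset_univ _)
            (fun k _ _ => hη0 x k)
        _ = 1 := hη1 x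
  have hcard_bd : ∀ (S : 𝒳 → Finset (Fin C)) (x : 𝒳), |((S x).card : ℝ)| ≤ (C:ℝ) := by
    intro S x
    rw [abs_of_nonneg (by positivity)]
    exact_mod_cast Finset.card_le_card (Finset.subset_univ (S x)) |>.trans
      (le_of_eq (by simp))
  have i1 : Integrable (fun x => ∑ k ∈ StopK x, η x k) μ :=
    aux_integrable (hsum_meas StopK hS_meas) 1 (hsum_bd StopK)
  have i2 : Integrable (fun x => ∑ k ∈ (Splus μ η (K:ℝ) x ∪ T x), η x k) μ :=
    aux_integrable (hsum_meas _ hmemU) 1 (hsum_bd _)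
  have icU : Integrable (fun x => ((Splus μ η (K:ℝ) x ∪ T x).card : ℝ)) μ :=
    aux_integrable (hcard_meas _ hmemU) (C:ℝ) (hcard_bd _)
  have icSp : Integrable (fun x => ((Splus μ η (K:ℝ) x).card : ℝ)) μ :=
    aux_integrable (hcard_meas _ hmemSp) (C:ℝ) (hcard_bd _)
  have icT : Integrable (fun x => ((T x).card : ℝ)) μ :=
    aux_integrable (hcard_meas _ hT_meas) (C:ℝ) (hcard_bd _)
  have ifpl : Integrable (fun x => max (ηs x kK - lam) 0) μ := by
    refine aux_integrable ((ha.sub measurable_const).max measurable_const) 1 fun x => ?_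
    rw [abs_of_nonneg (le_max_right _ _)]
    have := hs1 x kK
    exact max_le (by linarith) zero_le_one
  have igmi : Integrable (fun x => max (lam - ηs x kK1) 0) μ := by
    refine aux_integrable ((measurable_const.sub hb).max measurable_const) 1 fun x => ?_
    rw [abs_of_nonneg (le_max_right _ _)]
    have := hs0 x kK1
    exact max_le (by linarith) zero_le_one
  ------------------------------------------------------------------
  -- avgSize of the union is K
  ------------------------------------------------------------------
  have hsize : ∫ x, ((Splus μ η (K:ℝ) x ∪ T x).card : ℝ) ∂μ = (K:ℝ) := by
    have : ∫ x, ((Splus μ η (K:ℝ) x ∪ T x).card : ℝ) ∂μ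
        = ∫ x, (((Splus μ η (K:ℝ) x).card : ℝ) + ((T x).card : ℝ)) ∂μ := by
      exact integral_congr_ae (ae_of_all _ fun x => hcardU x)
    rw [this, integral_add icSp icT]
    have h1 : avgSize μ T = ∫ x, ((T x).card : ℝ) ∂μ := rfl
    have h2 : avgSize μ (Splus μ η (K:ℝ)) = ∫ x, ((Splus μ η (K:ℝ) x).card : ℝ) ∂μ := rfl
    rw [← h1, ← h2, hT_size]
    ring
  ------------------------------------------------------------------
  -- error-rate difference equals ∫ (F2 - F1)
  ------------------------------------------------------------------
  have herr : errRate μ η StopK - errRate μ η (fun x => Splus μ η (K : ℝ) x ∪ T x)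
      = ∫ x, ((∑ k ∈ (Splus μ η (K:ℝ) x ∪ T x), η x k) - ∑ k ∈ StopK x, η x k) ∂μ := by
    unfold errRate
    rw [integral_sub (integrable_const 1) i1, integral_sub (integrable_const 1) i2,
        integral_sub i2 i1]
    ring
  rw [herr]
  ------------------------------------------------------------------
  -- lower bound the integral via the pointwise inequality
  ------------------------------------------------------------------
  have ibound : Integrable (fun x => max (ηs x kK - lam) 0 + max (lam - ηs x kK1) 0
      + lam * (((Splus μ η (K:ℝ) x ∪ T x).card : ℝ) - (K:ℝ))) μ :=
    (ifpl.add igmi).add ((icU.sub (integrable_const _)).const_mul lam)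
  have step1 : ∫ x, ((∑ k ∈ (Splus μ η (K:ℝ) x ∪ T x), η x k) - ∑ k ∈ StopK x, η x k) ∂μ
      ≥ ∫ x, (max (ηs x kK - lam) 0 + max (lam - ηs x kK1) 0
          + lam * (((Splus μ η (K:ℝ) x ∪ T x).card : ℝ) - (K:ℝ))) ∂μ :=
    integral_mono ibound (i2.sub i1) key
  have step2 : ∫ x, (max (ηs x kK - lam) 0 + max (lam - ηs x kK1) 0
          + lam * (((Splus μ η (K:ℝ) x ∪ T x).card : ℝ) - (K:ℝ))) ∂μ
      = (∫ x, max (ηs x kK - lam) 0 ∂μ) + (∫ x, max (lam - ηs x kK1) 0 ∂μ) := by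
    have e1 : ∫ x, (max (ηs x kK - lam) 0 + max (lam - ηs x kK1) 0
          + lam * (((Splus μ η (K:ℝ) x ∪ T x).card : ℝ) - (K:ℝ))) ∂μ
        = (∫ x, (max (ηs x kK - lam) 0 + max (lam - ηs x kK1) 0) ∂μ)
          + ∫ x, lam * (((Splus μ η (K:ℝ) x ∪ T x).card : ℝ) - (K:ℝ)) ∂μ :=
      integral_add (ifpl.add igmi) ((icU.sub (integrable_const (K:ℝ))).const_mul lam)
    have e2 : ∫ x, (max (ηs x kK - lam) 0 + max (lam - ηs x kK1) 0) ∂μ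
        = (∫ x, max (ηs x kK - lam) 0 ∂μ) + ∫ x, max (lam - ηs x kK1) 0 ∂μ :=
      integral_add ifpl igmi
    have e3 : ∫ x, lam * (((Splus μ η (K:ℝ) x ∪ T x).card : ℝ) - (K:ℝ)) ∂μ
        = lam * ∫ x, (((Splus μ η (K:ℝ) x ∪ T x).card : ℝ) - (K:ℝ)) ∂μ :=
      integral_const_mul lam _
    have e4 : ∫ x, (((Splus μ η (K:ℝ) x ∪ T x).card : ℝ) - (K:ℝ)) ∂μ
        = (∫ x, ((Splus μ η (K:ℝ) x ∪ T x).card : ℝ) ∂μ) - ∫ _x, (K:ℝ) ∂μ :=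
      integral_sub icU (integrable_const (K:ℝ))
    have e5 : ∫ _x, (K:ℝ) ∂μ = (K:ℝ) := by simp
    rw [e1, e2, e3, e4, e5, hsize]
    ring
  ------------------------------------------------------------------
  -- upper bound the double integral
  ------------------------------------------------------------------
  have hinner : ∀ x, ∫ x', max (ηs x kK - ηs x' kK1) 0 ∂μ
      ≤ max (ηs x kK - lam) 0 + ∫ x', max (lam - ηs x' kK1) 0 ∂μ := by
    intro x
    have heq : ∫ x', (max (ηs x kK - lam) 0 + max (lam - ηs x' kK1) 0) ∂μ
        = max (ηs x kK - lam) 0 + ∫ x', max (lam - ηs x' kK1) 0 ∂μ := by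
      have e1 : ∫ x', (max (ηs x kK - lam) 0 + max (lam - ηs x' kK1) 0) ∂μ
          = (∫ _x', max (ηs x kK - lam) 0 ∂μ) + ∫ x', max (lam - ηs x' kK1) 0 ∂μ :=
        integral_add (integrable_const _) igmi
      have e2 : ∫ _x', max (ηs x kK - lam) 0 ∂μ = max (ηs x kK - lam) 0 := by simp
      rw [e1, e2]
    rw [← heq]
    have iinner : Integrable (fun x' => max (ηs x kK - ηs x' kK1) 0) μ := by
      refine aux_integrable ((measurable_const.sub hb).max measurable_const) 1 fun x' => ?_
      rw [abs_of_nonneg (le_max_right _ _)]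
      have h1 := hs1 x kK
      have h2 := hs0 x' kK1
      exact max_le (by linarith) zero_le_one
    refine integral_mono iinner ((integrable_const _).add igmi) fun x' => ?_
    have t1 : ηs x kK - lam ≤ max (ηs x kK - lam) 0 := le_max_left _ _
    have t2 : lam - ηs x' kK1 ≤ max (lam - ηs x' kK1) 0 := le_max_left _ _
    have t3 : (0:ℝ) ≤ max (ηs x kK - lam) 0 := le_max_right _ _
    have t4 : (0:ℝ) ≤ max (lam - ηs x' kK1) 0 := le_max_right _ _
    exact max_le (by linarith) (by linarith)
  have houter : ∫ x, ∫ x', max (ηs x kK - ηs x' kK1) 0 ∂μ ∂μ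
      ≤ (∫ x, max (ηs x kK - lam) 0 ∂μ) + (∫ x', max (lam - ηs x' kK1) 0 ∂μ) := by
    have hrhs_int : Integrable (fun x => max (ηs x kK - lam) 0
        + ∫ x', max (lam - ηs x' kK1) 0 ∂μ) μ := ifpl.add (integrable_const _)
    have h1 : ∫ x, ∫ x', max (ηs x kK - ηs x' kK1) 0 ∂μ ∂μ
        ≤ ∫ x, (max (ηs x kK - lam) 0 + ∫ x', max (lam - ηs x' kK1) 0 ∂μ) ∂μ := by
      refine integral_mono_of_nonneg (ae_of_all _ fun x => ?_) hrhs_int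
        (ae_of_all _ hinner)
      exact integral_nonneg fun x' => le_max_right _ _
    have h2 : ∫ x, (max (ηs x kK - lam) 0 + ∫ x', max (lam - ηs x' kK1) 0 ∂μ) ∂μ
        = (∫ x, max (ηs x kK - lam) 0 ∂μ) + (∫ x', max (lam - ηs x' kK1) 0 ∂μ) := by
      have e1 : ∫ x, (max (ηs x kK - lam) 0 + ∫ x', max (lam - ηs x' kK1) 0 ∂μ) ∂μ
          = (∫ x, max (ηs x kK - lam) 0 ∂μ)
            + ∫ _x, (∫ x', max (lam - ηs x' kK1) 0 ∂μ) ∂μ :=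
        integral_add ifpl (integrable_const _)
      have e2 : ∫ _x, (∫ x', max (lam - ηs x' kK1) 0 ∂μ) ∂μ
          = ∫ x', max (lam - ηs x' kK1) 0 ∂μ := by simp
      rw [e1, e2]
    linarith
  linarith [step1, step2, houter]
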